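/- arXiv:2406.16126 — 3 statements merged into one kernel-verified Lean document; each statement's English description precedes it below -/
import Mathlib

section
/- Let G : ℝ → ℝ with G ∈ L¹(ℝ) and xG(x) ∈ L¹(ℝ), and let a ∈ ℝ. If Ĝ(e^a) = 0 and Ĝ(-e^a) = 0, then the function p ↦ Ĝ(p) / ln(|p|/e^a) is essentially bounded on ℝ, i.e. N_a := ‖Ĝ(p)/ln(|p|e^{-a})‖_{L^∞(ℝ)} < ∞. -/
open MeasureTheory Real Filter
open scoped ENNReal Topology

/-- One-dimensional Fourier transform `Ĝ(p) = (2π)^{-1/2} ∫ G(x) e^{-ipx} dx`. -/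
noncomputable def ftR (G : ℝ → ℝ) (p : ℝ) : ℂ :=
  ((2 * Real.pi) ^ (-(1 : ℝ) / 2) : ℝ) *
    ∫ x : ℝ, (G x : ℂ) * Complex.exp (-Complex.I * ((p * x : ℝ) : ℂ))

lemma norm_exp_mul_I_sub_one_le (θ : ℝ) :
    ‖Complex.exp ((θ : ℂ) * Complex.I) - 1‖ ≤ |θ| := by
  have h1 : Complex.exp ((θ : ℂ) * Complex.I) - 1 =
      ((Real.cos θ - 1 : ℝ) : ℂ) + ((Real.sin θ : ℝ) : ℂ) * Complex.I := by
    rw [Complex.exp_mul_I, ← Complex.ofReal_cos, ← Complex.ofReal_sin]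
    push_cast; ring
  rw [h1]
  have h2 : ‖(((Real.cos θ - 1 : ℝ) : ℂ) + ((Real.sin θ : ℝ) : ℂ) * Complex.I)‖
      = Real.sqrt ((Real.cos θ - 1) ^ 2 + Real.sin θ ^ 2) := Complex.norm_add_mul_I _ _
  have h3 : (Real.cos θ - 1) ^ 2 + Real.sin θ ^ 2 ≤ θ ^ 2 := by
    nlinarith [Real.sin_sq_add_cos_sq θ, Real.one_sub_sq_div_two_le_cos (x := θ),
      Real.cos_le_one θ]
  calc ‖((Real.cos θ - 1 : ℝ) : ℂ) + ((Real.sin θ : ℝ) : ℂ) * Complex.I‖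
      = Real.sqrt ((Real.cos θ - 1) ^ 2 + Real.sin θ ^ 2) := h2
    _ ≤ Real.sqrt (θ ^ 2) := Real.sqrt_le_sqrt h3
    _ = |θ| := Real.sqrt_sq_eq_abs θ

lemma norm_exp_neg_I_sub (s t : ℝ) :
    ‖Complex.exp (-Complex.I * (s : ℂ)) - Complex.exp (-Complex.I * (t : ℂ))‖ ≤ |s - t| := by
  have hfac : Complex.exp (-Complex.I * (s : ℂ)) - Complex.exp (-Complex.I * (t : ℂ))
      = Complex.exp (-Complex.I * (t : ℂ)) * (Complex.exp (((t - s : ℝ) : ℂ) * Complex.I) - 1) := by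
    rw [mul_sub, ← Complex.exp_add, mul_one]
    push_cast; ring_nf
  rw [hfac, norm_mul]
  have h1 : ‖Complex.exp (-Complex.I * (t : ℂ))‖ = 1 := by
    rw [Complex.norm_exp]
    simp
  rw [h1, one_mul]
  calc ‖Complex.exp (((t - s : ℝ) : ℂ) * Complex.I) - 1‖ ≤ |t - s| :=
        norm_exp_mul_I_sub_one_le _
    _ = |s - t| := abs_sub_comm t s

lemma integrable_ker (G : ℝ → ℝ) (hG : Integrable G) (p : ℝ) :
    Integrable (fun x : ℝ => (G x : ℂ) * Complex.exp (-Complex.I * ((p * x : ℝ) : ℂ))) := by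
  have hm : AEStronglyMeasurable
      (fun x : ℝ => Complex.exp (-Complex.I * ((p * x : ℝ) : ℂ))) volume := by
    apply Continuous.aestronglyMeasurable
    fun_prop
  have hb : ∀ x : ℝ, ‖Complex.exp (-Complex.I * ((p * x : ℝ) : ℂ))‖ ≤ 1 := by
    intro x
    rw [Complex.norm_exp]
    simp
  have := (hG.ofReal).bdd_mul hm (Filter.Eventually.of_forall hb)
  exact this.congr (Filter.Eventually.of_forall fun x => mul_comm _ _)

lemma ftR_norm_le (G : ℝ → ℝ) (hG : Integrable G) (p : ℝ) :
    ‖ftR G p‖ ≤ ((2 * Real.pi) ^ (-(1 : ℝ) / 2) : ℝ) * ∫ x, |G x| := by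
  have hc : (0 : ℝ) < ((2 * Real.pi) ^ (-(1 : ℝ) / 2) : ℝ) := by
    apply Real.rpow_pos_of_pos; positivity
  rw [ftR, norm_mul]
  have h1 : ‖(((2 * Real.pi) ^ (-(1 : ℝ) / 2) : ℝ) : ℂ)‖ = ((2 * Real.pi) ^ (-(1 : ℝ) / 2) : ℝ) := by
    rw [Complex.norm_real, Real.norm_eq_abs, abs_of_pos hc]
  rw [h1]
  apply mul_le_mul_of_nonneg_left _ hc.le
  apply norm_integral_le_of_norm_le hG.abs
  filter_upwards with x
  rw [norm_mul]
  have : ‖Complex.exp (-Complex.I * ((p * x : ℝ) : ℂ))‖ = 1 := by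
    rw [Complex.norm_exp]; simp
  rw [this, mul_one, Complex.norm_real, Real.norm_eq_abs]

lemma ftR_sub_le (G : ℝ → ℝ) (hG : Integrable G)
    (hxG : Integrable (fun x => x * G x)) (p q : ℝ) :
    ‖ftR G p - ftR G q‖ ≤
      ((2 * Real.pi) ^ (-(1 : ℝ) / 2) : ℝ) * (∫ x, |x * G x|) * |p - q| := by
  have hc : (0 : ℝ) < ((2 * Real.pi) ^ (-(1 : ℝ) / 2) : ℝ) := by
    apply Real.rpow_pos_of_pos; positivity
  have hdiff : ftR G p - ftR G q = (((2 * Real.pi) ^ (-(1 : ℝ) / 2) : ℝ) : ℂ) *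
      ∫ x : ℝ, (G x : ℂ) * (Complex.exp (-Complex.I * ((p * x : ℝ) : ℂ))
        - Complex.exp (-Complex.I * ((q * x : ℝ) : ℂ))) := by
    rw [ftR, ftR, ← mul_sub, ← integral_sub (integrable_ker G hG p) (integrable_ker G hG q)]
    congr 1
    apply integral_congr_ae
    filter_upwards with x
    ring
  rw [hdiff, norm_mul]
  have h1 : ‖(((2 * Real.pi) ^ (-(1 : ℝ) / 2) : ℝ) : ℂ)‖ = ((2 * Real.pi) ^ (-(1 : ℝ) / 2) : ℝ) := by
    rw [Complex.norm_real, Real.norm_eq_abs, abs_of_pos hc]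
  rw [h1, mul_assoc]
  apply mul_le_mul_of_nonneg_left _ hc.le
  have hInt : Integrable (fun x : ℝ => |x * G x| * |p - q|) := (hxG.abs).mul_const _
  calc ‖∫ x : ℝ, (G x : ℂ) * (Complex.exp (-Complex.I * ((p * x : ℝ) : ℂ))
        - Complex.exp (-Complex.I * ((q * x : ℝ) : ℂ)))‖
      ≤ ∫ x : ℝ, |x * G x| * |p - q| := by
        apply norm_integral_le_of_norm_le hInt
        filter_upwards with x
        rw [norm_mul]
        have hker : ‖Complex.exp (-Complex.I * ((p * x : ℝ) : ℂ))
            - Complex.exp (-Complex.I * ((q * x : ℝ) : ℂ))‖ ≤ |p * x - q * x| :=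
          norm_exp_neg_I_sub _ _
        have : ‖(G x : ℂ)‖ = |G x| := by rw [Complex.norm_real, Real.norm_eq_abs]
        rw [this]
        calc |G x| * ‖Complex.exp (-Complex.I * ((p * x : ℝ) : ℂ))
              - Complex.exp (-Complex.I * ((q * x : ℝ) : ℂ))‖
            ≤ |G x| * |p * x - q * x| := by
              exact mul_le_mul_of_nonneg_left hker (abs_nonneg _)
          _ = |x * G x| * |p - q| := by
              rw [show p * x - q * x = (p - q) * x by ring, abs_mul, abs_mul]
              ring
    _ = (∫ x : ℝ, |x * G x|) * |p - q| := integral_mul_const _ _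

lemma log_abs_lower (t : ℝ) (ht : 0 < t) (ht2 : t ≤ 2) : |t - 1| ≤ 2 * |Real.log t| := by
  rcases le_or_gt 1 t with h | h
  · have hl : Real.log t ≥ (t - 1) / t := by
      have := Real.log_le_sub_one_of_pos (x := 1 / t) (by positivity)
      rw [Real.log_div one_ne_zero (ne_of_gt ht), Real.log_one] at this
      have h2 : 0 - Real.log t ≤ 1 / t - 1 := this
      have h3 : 1 - 1 / t ≤ Real.log t := by linarith
      rw [ge_iff_le, div_le_iff₀ ht]
      have : (1 - 1 / t) * t = t - 1 := by field_simp
      nlinarith [Real.log_nonneg h]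
    have hlog0 : 0 ≤ Real.log t := Real.log_nonneg h
    rw [abs_of_nonneg (by linarith : (0:ℝ) ≤ t - 1), abs_of_nonneg hlog0]
    have : (t - 1) / t ≥ (t - 1) / 2 := by
      apply div_le_div_of_nonneg_left <;> try linarith
    nlinarith
  · have hlog : Real.log t ≤ t - 1 := Real.log_le_sub_one_of_pos ht
    have hlogneg : Real.log t < 0 := Real.log_neg ht h
    rw [abs_of_neg (by linarith : t - 1 < 0), abs_of_neg hlogneg]
    linarith

/-- if `G, xG ∈ L¹(ℝ)` and `Ĝ(±e^a) = 0`, then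
`p ↦ Ĝ(p)/ln(|p|/e^a)` is (essentially) bounded on `ℝ`. -/
theorem stmt2 (G : ℝ → ℝ) (hG : Integrable G)
    (hxG : Integrable (fun x => x * G x)) (a : ℝ)
    (h₁ : ftR G (Real.exp a) = 0) (h₂ : ftR G (-Real.exp a) = 0) :
    ∃ C : ℝ, ∀ p : ℝ,
      ‖ftR G p / ((Real.log (|p| / Real.exp a) : ℝ) : ℂ)‖ ≤ C := by
  set c : ℝ := ((2 * Real.pi) ^ (-(1 : ℝ) / 2) : ℝ) with hc_def
  have hc : (0 : ℝ) < c := by apply Real.rpow_pos_of_pos; positivity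
  set E : ℝ := Real.exp a with hE_def
  have hE : (0 : ℝ) < E := Real.exp_pos a
  set K : ℝ := ∫ x, |x * G x| with hK_def
  have hK : 0 ≤ K := integral_nonneg fun x => abs_nonneg _
  set M : ℝ := ∫ x, |G x| with hM_def
  have hM : 0 ≤ M := integral_nonneg fun x => abs_nonneg _
  have hlog2 : (0:ℝ) < Real.log 2 := Real.log_pos one_lt_two
  refine ⟨max (2 * c * K * E) (c * M / Real.log 2), fun p => ?_⟩
  have hC0 : (0:ℝ) ≤ max (2 * c * K * E) (c * M / Real.log 2) := by
    apply le_max_of_le_left; positivity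
  by_cases hp0 : p = 0
  · simp [hp0, hC0]
  have habsp : 0 < |p| := abs_pos.mpr hp0
  set t : ℝ := |p| / E with ht_def
  have ht : 0 < t := by positivity
  rw [norm_div, Complex.norm_real, Real.norm_eq_abs]
  by_cases ht2 : t ≤ 2
  · -- near the zeros: use Lipschitz bound
    have hlow : |t - 1| ≤ 2 * |Real.log t| := log_abs_lower t ht ht2
    -- pick the relevant zero
    rcases lt_or_gt_of_ne hp0 with hneg | hpos
    · -- p < 0 : use zero at -E
      have habs : |p| = -p := abs_of_neg hneg
      have hnum : ‖ftR G p‖ ≤ c * K * |p + E| := by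
        have := ftR_sub_le G hG hxG p (-E)
        rw [h₂, sub_zero] at this
        rw [sub_neg_eq_add] at this; exact this
      have ht1 : |t - 1| = |p + E| / E := by
        have h : t - 1 = -(p + E) / E := by
          rw [ht_def, habs]; field_simp; ring
        rw [h, abs_div, abs_neg, abs_of_pos hE]
      by_cases hpe : p = -E
      · have : ftR G p = 0 := by rw [hpe]; exact h₂
        rw [this]; simpa using hC0
      · have hpe' : 0 < |p + E| := abs_pos.mpr fun h => hpe (by linarith)
        have hlogpos : 0 < |Real.log t| := by
          by_contra h
          push_neg at h
          have : |Real.log t| = 0 := le_antisymm h (abs_nonneg _)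
          rw [this] at hlow
          have : |t - 1| = 0 := le_antisymm (by linarith) (abs_nonneg _)
          rw [ht1] at this
          exact absurd this (div_pos hpe' hE).ne'
        apply le_max_of_le_left
        rw [div_le_iff₀ hlogpos]
        calc ‖ftR G p‖ ≤ c * K * |p + E| := hnum
          _ ≤ c * K * (E * (2 * |Real.log t|)) := by
              apply mul_le_mul_of_nonneg_left _ (by positivity)
              have : |p + E| = E * |t - 1| := by rw [ht1]; field_simp
              rw [this]
              exact mul_le_mul_of_nonneg_left hlow hE.le
          _ = 2 * c * K * E * |Real.log t| := by ring
    · -- p > 0 : use zero at E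
      have habs : |p| = p := abs_of_pos hpos
      have hnum : ‖ftR G p‖ ≤ c * K * |p - E| := by
        have := ftR_sub_le G hG hxG p E
        rw [h₁, sub_zero] at this
        exact this
      have ht1 : |t - 1| = |p - E| / E := by
        rw [ht_def, habs, show p / E - 1 = (p - E) / E by field_simp, abs_div, abs_of_pos hE]
      by_cases hpe : p = E
      · have : ftR G p = 0 := by rw [hpe]; exact h₁
        rw [this]; simpa using hC0
      · have hpe' : 0 < |p - E| := abs_pos.mpr fun h => hpe (by linarith)
        have hlogpos : 0 < |Real.log t| := by
          by_contra h
          push_neg at h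
          have : |Real.log t| = 0 := le_antisymm h (abs_nonneg _)
          rw [this] at hlow
          have : |t - 1| = 0 := le_antisymm (by linarith) (abs_nonneg _)
          rw [ht1] at this
          exact absurd this (div_pos hpe' hE).ne'
        apply le_max_of_le_left
        rw [div_le_iff₀ hlogpos]
        calc ‖ftR G p‖ ≤ c * K * |p - E| := hnum
          _ ≤ c * K * (E * (2 * |Real.log t|)) := by
              apply mul_le_mul_of_nonneg_left _ (by positivity)
              have : |p - E| = E * |t - 1| := by rw [ht1]; field_simp
              rw [this]
              exact mul_le_mul_of_nonneg_left hlow hE.le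
          _ = 2 * c * K * E * |Real.log t| := by ring
  · -- far away: |log t| ≥ log 2
    push_neg at ht2
    have hlog : Real.log 2 ≤ Real.log t := Real.log_le_log two_pos ht2.le
    have hlogabs : Real.log 2 ≤ |Real.log t| := hlog.trans (le_abs_self _)
    apply le_max_of_le_right
    rw [div_le_div_iff₀ (by linarith) hlog2]
    calc ‖ftR G p‖ * Real.log 2 ≤ (c * M) * |Real.log t| := by
          apply mul_le_mul (ftR_norm_le G hG p) hlogabs hlog2.le (by positivity)
      _ = c * M * |Real.log t| := by ring
end

section
/- Let a ∈ ℝ and d = 1. Let G_m, G : ℝ → ℝ satisfy G_m, G ∈ L¹(ℝ), xG_m, xG ∈ L¹(ℝ), G_m → G and xG_m → xG in L¹(ℝ), and Ĝ_m(±e^a) = 0 for all m. Then Ĝ_m(p)/ln(|p|/e^a) → Ĝ(p)/ln(|p|/e^a) in L^∞(ℝ) as m → ∞. -/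
open MeasureTheory Real Filter
open scoped ENNReal Topology

namespace Stmt17Aux

noncomputable def c : ℝ := (2 * Real.pi) ^ (-(1 : ℝ) / 2)

lemma c_pos : 0 < c := by
  unfold c
  have : (0:ℝ) < 2 * Real.pi := by positivity
  positivity

lemma norm_exp_I_mul (r : ℝ) : ‖Complex.exp (-Complex.I * (r : ℂ))‖ = 1 := by
  rw [Complex.norm_exp]
  simp

lemma norm_exp_mul_I_sub_one_le (θ : ℝ) :
    ‖Complex.exp ((θ : ℂ) * Complex.I) - 1‖ ≤ |θ| := by
  rw [Complex.exp_mul_I, ← Complex.ofReal_cos, ← Complex.ofReal_sin]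
  have h1 : (Real.cos θ : ℂ) + (Real.sin θ : ℂ) * Complex.I - 1
      = ((Real.cos θ - 1 : ℝ) : ℂ) + ((Real.sin θ : ℝ) : ℂ) * Complex.I := by
    push_cast; ring
  rw [h1, Complex.norm_add_mul_I]
  have h2 : (Real.cos θ - 1) ^ 2 + Real.sin θ ^ 2 ≤ θ ^ 2 := by
    have hc := Real.one_sub_sq_div_two_le_cos (x := θ)
    nlinarith [Real.sin_sq_add_cos_sq θ]
  calc Real.sqrt ((Real.cos θ - 1) ^ 2 + Real.sin θ ^ 2)
      ≤ Real.sqrt (θ ^ 2) := Real.sqrt_le_sqrt h2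
    _ = |θ| := Real.sqrt_sq_eq_abs θ

lemma norm_exp_sub_exp_le (r s : ℝ) :
    ‖Complex.exp (-Complex.I * (r : ℂ)) - Complex.exp (-Complex.I * (s : ℂ))‖ ≤ |r - s| := by
  have h : Complex.exp (-Complex.I * (r : ℂ)) - Complex.exp (-Complex.I * (s : ℂ))
      = Complex.exp (-Complex.I * (s : ℂ)) * (Complex.exp (((s - r : ℝ) : ℂ) * Complex.I) - 1) := by
    rw [mul_sub, mul_one, ← Complex.exp_add]
    push_cast
    ring_nf
  rw [h, norm_mul, norm_exp_I_mul, one_mul]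
  calc ‖Complex.exp (((s - r : ℝ) : ℂ) * Complex.I) - 1‖ ≤ |s - r| :=
        norm_exp_mul_I_sub_one_le _
    _ = |r - s| := abs_sub_comm _ _

lemma integrable_kernel {F : ℝ → ℝ} (hF : Integrable F) (p : ℝ) :
    Integrable (fun x => (F x : ℂ) * Complex.exp (-Complex.I * ((p * x : ℝ) : ℂ))) := by
  have : Integrable (fun x : ℝ => (F x : ℂ)) := hF.ofReal
  refine (this.bdd_mul (f := fun x : ℝ => Complex.exp (-Complex.I * ((p * x : ℝ) : ℂ)))
    (c := 1) ?_ ?_).congr ?_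
  · exact (Complex.continuous_exp.comp (by fun_prop)).aestronglyMeasurable
  · filter_upwards with x
    rw [norm_exp_I_mul]
  · filter_upwards with x using mul_comm _ _

lemma ftR_norm_le (F : ℝ → ℝ) (p : ℝ) : ‖ftR F p‖ ≤ c * ∫ x, |F x| := by
  unfold ftR
  rw [norm_mul, Complex.norm_real, Real.norm_eq_abs]
  show |c| * _ ≤ _
  rw [abs_of_pos c_pos]
  have h1 : ‖∫ x : ℝ, (F x : ℂ) * Complex.exp (-Complex.I * ((p * x : ℝ) : ℂ))‖
      ≤ ∫ x, ‖(F x : ℂ) * Complex.exp (-Complex.I * ((p * x : ℝ) : ℂ))‖ :=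
    norm_integral_le_integral_norm _
  have h2 : (∫ x, ‖(F x : ℂ) * Complex.exp (-Complex.I * ((p * x : ℝ) : ℂ))‖)
      = ∫ x, |F x| := by
    congr 1
    ext x
    rw [norm_mul, norm_exp_I_mul, mul_one, Complex.norm_real, Real.norm_eq_abs]
  rw [h2] at h1
  exact mul_le_mul_of_nonneg_left h1 c_pos.le

lemma ftR_sub {F H : ℝ → ℝ} (hF : Integrable F) (hH : Integrable H) (p : ℝ) :
    ftR (fun x => F x - H x) p = ftR F p - ftR H p := by
  unfold ftR
  rw [← mul_sub, ← integral_sub (integrable_kernel hF p) (integrable_kernel hH p)]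
  congr 2
  ext x
  push_cast
  ring

lemma ftR_diff_le {F : ℝ → ℝ} (hF : Integrable F) (hxF : Integrable fun x => x * F x)
    (p q : ℝ) :
    ‖ftR F p - ftR F q‖ ≤ c * (|p - q| * ∫ x, |x * F x|) := by
  unfold ftR
  rw [← mul_sub, ← integral_sub (integrable_kernel hF p) (integrable_kernel hF q),
    norm_mul, Complex.norm_real, Real.norm_eq_abs]
  show |c| * _ ≤ _
  rw [abs_of_pos c_pos]
  refine mul_le_mul_of_nonneg_left ?_ c_pos.le
  calc ‖∫ x : ℝ, ((F x : ℂ) * Complex.exp (-Complex.I * ((p * x : ℝ) : ℂ))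
          - (F x : ℂ) * Complex.exp (-Complex.I * ((q * x : ℝ) : ℂ)))‖
      ≤ ∫ x, ‖(F x : ℂ) * Complex.exp (-Complex.I * ((p * x : ℝ) : ℂ))
          - (F x : ℂ) * Complex.exp (-Complex.I * ((q * x : ℝ) : ℂ))‖ :=
        norm_integral_le_integral_norm _
    _ ≤ ∫ x, |p - q| * |x * F x| := by
        refine integral_mono_of_nonneg (ae_of_all _ fun x => norm_nonneg _)
          ((hxF.abs).const_mul _) (ae_of_all _ fun x => ?_)
        dsimp only
        rw [← mul_sub, norm_mul, Complex.norm_real, Real.norm_eq_abs]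
        calc |F x| * ‖Complex.exp (-Complex.I * ((p * x : ℝ) : ℂ))
              - Complex.exp (-Complex.I * ((q * x : ℝ) : ℂ))‖
            ≤ |F x| * |p * x - q * x| :=
              mul_le_mul_of_nonneg_left (norm_exp_sub_exp_le _ _) (abs_nonneg _)
          _ = |p - q| * |x * F x| := by
              rw [← sub_mul, abs_mul, abs_mul]
              ring
    _ = |p - q| * ∫ x, |x * F x| := integral_const_mul _ _

lemma abs_sub_one_le_two_mul_abs_log {x : ℝ} (hx : 0 < x) (hx2 : x ≤ 2) :
    |x - 1| ≤ 2 * |Real.log x| := by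
  rcases le_or_gt x 1 with h | h
  · have h1 : Real.log x ≤ x - 1 := Real.log_le_sub_one_of_pos hx
    rw [abs_of_nonpos (by linarith), abs_of_nonpos (Real.log_nonpos hx.le h)]
    linarith
  · have h1 : Real.log x⁻¹ ≤ x⁻¹ - 1 := Real.log_le_sub_one_of_pos (by positivity)
    rw [Real.log_inv] at h1
    have hlog : 0 ≤ Real.log x := Real.log_nonneg h.le
    rw [abs_of_nonneg (by linarith), abs_of_nonneg hlog]
    have h2 : x - 1 ≤ x * Real.log x := by
      have := mul_le_mul_of_nonneg_left h1 hx.le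
      rw [mul_sub, mul_inv_cancel₀ (ne_of_gt hx)] at this
      nlinarith
    nlinarith

end Stmt17Aux

/-- d = 1: if `G_m → G` and `xG_m → xG` in `L¹(ℝ)`, and
`Ĝ_m(±e^a) = 0` for all `m`, then `Ĝ_m(p)/ln(|p|/e^a) → Ĝ(p)/ln(|p|/e^a)`
uniformly on `ℝ` (i.e. in `L^∞(ℝ)`). -/
theorem stmt17 (a : ℝ) (Gm : ℕ → ℝ → ℝ) (G : ℝ → ℝ)
    (hGm : ∀ m, Integrable (Gm m)) (hG : Integrable G)
    (hxGm : ∀ m, Integrable (fun x => x * Gm m x))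
    (hxG : Integrable (fun x => x * G x))
    (hconv : Tendsto (fun m => ∫ x, |Gm m x - G x|) atTop (𝓝 0))
    (hconvx : Tendsto (fun m => ∫ x, |x * Gm m x - x * G x|) atTop (𝓝 0))
    (horth : ∀ m, ftR (Gm m) (Real.exp a) = 0 ∧ ftR (Gm m) (-Real.exp a) = 0) :
    TendstoUniformly
      (fun m p => ftR (Gm m) p / ((Real.log (|p| / Real.exp a) : ℝ) : ℂ))
      (fun p => ftR G p / ((Real.log (|p| / Real.exp a) : ℝ) : ℂ)) atTop := by
  classical
  set c := Stmt17Aux.c with hcdef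
  have hc : 0 < c := Stmt17Aux.c_pos
  have hlog2 : (0:ℝ) < Real.log 2 := Real.log_pos (by norm_num)
  have hInt1 : ∀ m, (0:ℝ) ≤ ∫ x, |Gm m x - G x| :=
    fun m => integral_nonneg fun x => abs_nonneg _
  have hInt2 : ∀ m, (0:ℝ) ≤ ∫ x, |x * Gm m x - x * G x| :=
    fun m => integral_nonneg fun x => abs_nonneg _
  have hH : ∀ m, Integrable (fun x => G x - Gm m x) := fun m => hG.sub (hGm m)
  have hxH : ∀ m, Integrable (fun x => x * (G x - Gm m x)) := by
    intro m
    refine (hxG.sub (hxGm m)).congr (ae_of_all _ fun x => ?_)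
    simp only [Pi.sub_apply]
    ring
  have habs1 : ∀ m, (∫ x, |G x - Gm m x|) = ∫ x, |Gm m x - G x| := by
    intro m; congr 1; ext x; rw [abs_sub_comm]
  have habs2 : ∀ m, (∫ x, |x * (G x - Gm m x)|) = ∫ x, |x * Gm m x - x * G x| := by
    intro m; congr 1; ext x; rw [mul_sub, abs_sub_comm]
  have hGz : ∀ s : ℝ, (∀ m, ftR (Gm m) s = 0) → ftR G s = 0 := by
    intro s hs
    have hb : ∀ m, ‖ftR G s‖ ≤ c * ∫ x, |Gm m x - G x| := by
      intro m
      have h1 := Stmt17Aux.ftR_sub (hGm m) hG s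
      rw [hs m, zero_sub] at h1
      have h2 := Stmt17Aux.ftR_norm_le (fun x => Gm m x - G x) s
      rw [h1, norm_neg] at h2
      exact h2
    have hlim : Tendsto (fun m => c * ∫ x, |Gm m x - G x|) atTop (𝓝 0) := by
      simpa using hconv.const_mul c
    have hle : ‖ftR G s‖ ≤ 0 := ge_of_tendsto hlim (Eventually.of_forall hb)
    simpa using le_antisymm hle (norm_nonneg _)
  have hGz1 : ftR G (Real.exp a) = 0 := hGz _ fun m => (horth m).1
  have hGz2 : ftR G (-Real.exp a) = 0 := hGz _ fun m => (horth m).2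
  set B : ℕ → ℝ := fun m =>
    c / Real.log 2 * (∫ x, |Gm m x - G x|)
      + 2 * c * Real.exp a * ∫ x, |x * Gm m x - x * G x| with hBdef
  have hBtend : Tendsto B atTop (𝓝 0) := by
    have := (hconv.const_mul (c / Real.log 2)).add (hconvx.const_mul (2 * c * Real.exp a))
    simpa using this
  have key : ∀ m p, dist (ftR G p / ((Real.log (|p| / Real.exp a) : ℝ) : ℂ))
      (ftR (Gm m) p / ((Real.log (|p| / Real.exp a) : ℝ) : ℂ)) ≤ B m := by
    intro m p
    have hBnn : 0 ≤ B m := by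
      have := hInt1 m; have := hInt2 m
      have hea : (0:ℝ) < Real.exp a := Real.exp_pos a
      positivity
    set t := |p| / Real.exp a with htdef
    rcases eq_or_ne (Real.log t) 0 with h0 | h0
    · rw [h0]
      simp only [Complex.ofReal_zero, div_zero, dist_self]
      exact hBnn
    · have htnn : (0:ℝ) ≤ t := div_nonneg (abs_nonneg p) (Real.exp_pos a).le
      have htne : t ≠ 0 := fun h => h0 (by rw [h, Real.log_zero])
      have ht0 : 0 < t := lt_of_le_of_ne htnn (Ne.symm htne)
      rw [dist_eq_norm, div_sub_div_same, ← Stmt17Aux.ftR_sub hG (hGm m),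
        norm_div, Complex.norm_real, Real.norm_eq_abs]
      have hLpos : 0 < |Real.log t| := abs_pos.mpr h0
      rcases le_or_gt t 2 with ht2 | ht2
      · -- near the zeros: use the derivative bound
        set s : ℝ := if 0 ≤ p then Real.exp a else -Real.exp a with hsdef
        have hfs : ftR (fun x => G x - Gm m x) s = 0 := by
          rw [Stmt17Aux.ftR_sub hG (hGm m)]
          by_cases hsign : 0 ≤ p
          · rw [hsdef]; simp only [if_pos hsign]
            rw [hGz1, (horth m).1, sub_zero]
          · rw [hsdef]; simp only [if_neg hsign]
            rw [hGz2, (horth m).2, sub_zero]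
        have h2 : |p| = t * Real.exp a := by
          rw [htdef, div_mul_cancel₀ _ (Real.exp_pos a).ne']
        have hps : |p - s| = Real.exp a * |t - 1| := by
          have h3 : Real.exp a * |t - 1| = |(|p| - Real.exp a)| := by
            rw [h2, show t * Real.exp a - Real.exp a = Real.exp a * (t - 1) by ring,
              abs_mul, abs_of_pos (Real.exp_pos a)]
          rw [h3]
          by_cases hsign : 0 ≤ p
          · rw [hsdef, if_pos hsign, abs_of_nonneg hsign]
          · rw [hsdef, if_neg hsign, abs_of_neg (lt_of_not_ge hsign), sub_neg_eq_add,
              ← abs_neg (p + Real.exp a)]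
            congr 1; ring
        have hdiff := Stmt17Aux.ftR_diff_le (hH m) (hxH m) p s
        rw [show ftR (fun x => G x - Gm m x) p
            = ftR (fun x => G x - Gm m x) p - ftR (fun x => G x - Gm m x) s by
          rw [hfs, sub_zero]]
        have hlogb := Stmt17Aux.abs_sub_one_le_two_mul_abs_log ht0 ht2
        have hbound : ‖ftR (fun x => G x - Gm m x) p - ftR (fun x => G x - Gm m x) s‖
            ≤ 2 * c * Real.exp a * (∫ x, |x * Gm m x - x * G x|) * |Real.log t| := by
          refine hdiff.trans ?_
          rw [hps, habs2 m]
          have h3 : Real.exp a * |t - 1| ≤ Real.exp a * (2 * |Real.log t|) :=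
            mul_le_mul_of_nonneg_left hlogb (Real.exp_pos a).le
          calc c * (Real.exp a * |t - 1| * ∫ x, |x * Gm m x - x * G x|)
              ≤ c * (Real.exp a * (2 * |Real.log t|) * ∫ x, |x * Gm m x - x * G x|) := by
                refine mul_le_mul_of_nonneg_left ?_ hc.le
                exact mul_le_mul_of_nonneg_right h3 (hInt2 m)
            _ = 2 * c * Real.exp a * (∫ x, |x * Gm m x - x * G x|) * |Real.log t| := by
                ring
        rw [div_le_iff₀ hLpos]
        refine hbound.trans ?_
        have h4 : 2 * c * Real.exp a * (∫ x, |x * Gm m x - x * G x|) ≤ B m := by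
          rw [hBdef]
          have h5 : 0 ≤ c / Real.log 2 * ∫ x, |Gm m x - G x| := by
            have := hInt1 m; positivity
          linarith
        exact mul_le_mul_of_nonneg_right h4 (abs_nonneg _)
      · -- away from the zeros: use the L¹ bound
        have hlogt : Real.log 2 ≤ Real.log t := Real.log_le_log (by norm_num) ht2.le
        have hLt : Real.log 2 ≤ |Real.log t| := hlogt.trans (le_abs_self _)
        have hnorm : ‖ftR (fun x => G x - Gm m x) p‖ ≤ c * ∫ x, |Gm m x - G x| := by
          have := Stmt17Aux.ftR_norm_le (fun x => G x - Gm m x) p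
          rwa [habs1 m] at this
        calc ‖ftR (fun x => G x - Gm m x) p‖ / |Real.log t|
            ≤ (c * ∫ x, |Gm m x - G x|) / Real.log 2 := by
              refine div_le_div₀ (mul_nonneg hc.le (hInt1 m)) hnorm hlog2 hLt
          _ = c / Real.log 2 * ∫ x, |Gm m x - G x| := by ring
          _ ≤ B m := by
              rw [hBdef]
              have h5 : 0 ≤ 2 * c * Real.exp a * ∫ x, |x * Gm m x - x * G x| := by
                have := hInt2 m
                have hea : (0:ℝ) < Real.exp a := Real.exp_pos a
                positivity
              linarith
  rw [Metric.tendstoUniformly_iff]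
  intro ε hε
  filter_upwards [hBtend.eventually_lt_const hε] with m hm p
  exact lt_of_le_of_lt (key m p) hm
end

section
/- Let a ∈ ℝ, l > 0, ε ∈ (0,1). Suppose u, u_m ∈ L²(ℝᵈ) satisfy û(p) = (2π)^{d/2}Ĝ(p)f̂(p)/ln(|p|/e^a) and û_m(p) = (2π)^{d/2}Ĝ_m(p)f̂_m(p)/ln(|p|/e^a), where f = F(u(·),·), f_m = F(u_m(·),·), F is l-Lipschitz in its first argument, and (2π)^{d/2}N_{a,m} l ≤ 1 − ε. Then ‖u_m − u‖_{L²(ℝᵈ)} ≤ (2π)^{d/2} ε^{-1} ‖Ĝ_m/ln(|p|/e^a) − Ĝ/ln(|p|/e^a)‖_{L^∞(ℝᵈ)} ‖F(u(·),·)‖_{L²(ℝᵈ)}. -/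
open MeasureTheory Real Filter
open scoped ENNReal Topology

/-- with `û = (2π)^{d/2} Ĝ f̂ / ln(|p|/e^a)`,
`û_m = (2π)^{d/2} Ĝ_m f̂_m / ln(|p|/e^a)`, `f = F(u(·),·)`, `f_m = F(u_m(·),·)`,
`F` `l`-Lipschitz in its first argument and `(2π)^{d/2} N_{a,m} l ≤ 1 − ε`,
one has `‖u_m − u‖_{L²} ≤ (2π)^{d/2} ε^{-1} ‖Ĝ_m/ln − Ĝ/ln‖_{L^∞} ‖F(u(·),·)‖_{L²}`.
The hats are the Fourier images of the corresponding functions; the Plancherel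
identities relating the two sides are recorded as hypotheses, `D` bounds the
`L^∞` distance of the quotients and `Nam` bounds `‖Ĝ_m/ln(|p|/e^a)‖_{L^∞}`. -/
theorem stmt19 (d : ℕ) (a l ε Nam D : ℝ) (hl : 0 < l) (hε : ε ∈ Set.Ioo (0 : ℝ) 1)
    (F : ℝ → EuclideanSpace ℝ (Fin d) → ℝ)
    (hFlip : ∀ (u₁ u₂ : ℝ) (x : EuclideanSpace ℝ (Fin d)),
      |F u₁ x - F u₂ x| ≤ l * |u₁ - u₂|)
    (u um : EuclideanSpace ℝ (Fin d) → ℝ)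
    (hu2 : MemLp u 2 (volume : Measure (EuclideanSpace ℝ (Fin d))))
    (hum2 : MemLp um 2 (volume : Measure (EuclideanSpace ℝ (Fin d))))
    (Ghat Gmhat fhat fmhat uhat umhat : EuclideanSpace ℝ (Fin d) → ℂ)
    (hGhat : Measurable Ghat) (hGmhat : Measurable Gmhat)
    (hfhat : MemLp fhat 2 (volume : Measure (EuclideanSpace ℝ (Fin d))))
    (hfmhat : MemLp fmhat 2 (volume : Measure (EuclideanSpace ℝ (Fin d))))
    -- `û(p) = (2π)^{d/2} Ĝ(p) f̂(p)/ln(|p|/e^a)` and similarly for `û_m`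
    (huhat : ∀ p, uhat p = ((2 * Real.pi) ^ ((d : ℝ) / 2) : ℝ) * Ghat p * fhat p /
        ((Real.log (‖p‖ / Real.exp a) : ℝ) : ℂ))
    (humhat : ∀ p, umhat p = ((2 * Real.pi) ^ ((d : ℝ) / 2) : ℝ) * Gmhat p * fmhat p /
        ((Real.log (‖p‖ / Real.exp a) : ℝ) : ℂ))
    -- `N_{a,m} = ‖Ĝ_m/ln(|p|/e^a)‖_{L^∞}` with `(2π)^{d/2} N_{a,m} l ≤ 1 − ε`
    (hNam : ∀ p, ‖Gmhat p / ((Real.log (‖p‖ / Real.exp a) : ℝ) : ℂ)‖ ≤ Nam)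
    (hcontr : (2 * Real.pi) ^ ((d : ℝ) / 2) * Nam * l ≤ 1 - ε)
    -- `D = ‖Ĝ_m/ln(|p|/e^a) − Ĝ/ln(|p|/e^a)‖_{L^∞}`
    (hD : ∀ p, ‖Gmhat p / ((Real.log (‖p‖ / Real.exp a) : ℝ) : ℂ) -
        Ghat p / ((Real.log (‖p‖ / Real.exp a) : ℝ) : ℂ)‖ ≤ D)
    -- Plancherel identities identifying physical- and Fourier-side `L²` norms
    (hPlanu : eLpNorm (fun x => um x - u x) 2 volume =
        eLpNorm (fun p => umhat p - uhat p) 2 volume)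
    (hPlanf : eLpNorm (fun p => fmhat p - fhat p) 2 volume =
        eLpNorm (fun x => F (um x) x - F (u x) x) 2 volume)
    (hPlanF : eLpNorm fhat 2 volume = eLpNorm (fun x => F (u x) x) 2 volume) :
    eLpNorm (fun x => um x - u x) 2 volume ≤
      ENNReal.ofReal ((2 * Real.pi) ^ ((d : ℝ) / 2) / ε * D) *
        eLpNorm (fun x => F (u x) x) 2 volume := by
  obtain ⟨hε0, hε1⟩ := hε
  set C : ℝ := (2 * Real.pi) ^ ((d : ℝ) / 2) with hCdef
  have hCpos : 0 < C := Real.rpow_pos_of_pos (by positivity) _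
  have hNam0 : 0 ≤ Nam := le_trans (norm_nonneg _) (hNam 0)
  have hD0 : 0 ≤ D := le_trans (norm_nonneg _) (hD 0)
  set X := eLpNorm (fun x => um x - u x) 2 volume with hXdef
  set Y := eLpNorm (fun x => F (u x) x) 2 volume with hYdef
  have hXfin : X ≠ ⊤ := (hum2.sub hu2).2.ne
  -- pointwise estimate on the Fourier side
  have hpt : ∀ p, ‖umhat p - uhat p‖ ≤
      ‖(C * D) * ‖fhat p‖ + (C * Nam) * ‖fmhat p - fhat p‖‖ := by
    intro p
    set L : ℂ := ((Real.log (‖p‖ / Real.exp a) : ℝ) : ℂ) with hL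
    have key : umhat p - uhat p
        = (C : ℂ) * ((Gmhat p / L - Ghat p / L) * fhat p)
          + (C : ℂ) * ((Gmhat p / L) * (fmhat p - fhat p)) := by
      rw [humhat, huhat, ← hL]
      by_cases h0 : L = 0
      · simp [h0]
      · field_simp
        ring
    have h1 : ‖(C : ℂ) * ((Gmhat p / L - Ghat p / L) * fhat p)‖ ≤ (C * D) * ‖fhat p‖ := by
      rw [norm_mul, norm_mul, Complex.norm_real, Real.norm_eq_abs, abs_of_nonneg hCpos.le,
        mul_assoc]
      exact mul_le_mul_of_nonneg_left
        (mul_le_mul_of_nonneg_right (hD p) (norm_nonneg _)) hCpos.le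
    have h2 : ‖(C : ℂ) * ((Gmhat p / L) * (fmhat p - fhat p))‖
        ≤ (C * Nam) * ‖fmhat p - fhat p‖ := by
      rw [norm_mul, norm_mul, Complex.norm_real, Real.norm_eq_abs, abs_of_nonneg hCpos.le,
        mul_assoc]
      exact mul_le_mul_of_nonneg_left
        (mul_le_mul_of_nonneg_right (hNam p) (norm_nonneg _)) hCpos.le
    have hnn : 0 ≤ (C * D) * ‖fhat p‖ + (C * Nam) * ‖fmhat p - fhat p‖ := by positivity
    rw [key, Real.norm_eq_abs, abs_of_nonneg hnn]
    exact le_trans (norm_add_le _ _) (add_le_add h1 h2)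
  -- constants out of eLpNorm
  have hg1 : eLpNorm (fun p => (C * D) * ‖fhat p‖) 2 volume
      = ENNReal.ofReal (C * D) * eLpNorm fhat 2 volume := by
    rw [show (fun p => (C * D) * ‖fhat p‖) = (C * D) • (fun p => ‖fhat p‖) from rfl,
      eLpNorm_const_smul, eLpNorm_norm]
    congr 1
    rw [← ofReal_norm, Real.norm_eq_abs,
      abs_of_nonneg (by positivity : (0:ℝ) ≤ C * D)]
  have hg2 : eLpNorm (fun p => (C * Nam) * ‖fmhat p - fhat p‖) 2 volume
      = ENNReal.ofReal (C * Nam) * eLpNorm (fun p => fmhat p - fhat p) 2 volume := by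
    rw [show (fun p => (C * Nam) * ‖fmhat p - fhat p‖)
        = (C * Nam) • (fun p => ‖fmhat p - fhat p‖) from rfl,
      eLpNorm_const_smul, eLpNorm_norm]
    congr 1
    rw [← ofReal_norm, Real.norm_eq_abs,
      abs_of_nonneg (by positivity : (0:ℝ) ≤ C * Nam)]
  -- Lipschitz estimate
  have hlip : eLpNorm (fun x => F (um x) x - F (u x) x) 2 volume ≤ ENNReal.ofReal l * X := by
    have h1 : eLpNorm (fun x => F (um x) x - F (u x) x) 2 volume
        ≤ eLpNorm (fun x => l * (um x - u x)) 2 volume := by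
      refine eLpNorm_mono fun x => ?_
      rw [Real.norm_eq_abs, Real.norm_eq_abs, abs_mul, abs_of_nonneg hl.le]
      exact hFlip (um x) (u x) x
    refine h1.trans_eq ?_
    rw [show (fun x => l * (um x - u x)) = l • (fun x => um x - u x) from rfl,
      eLpNorm_const_smul]
    congr 1
    simp [ENNReal.smul_def, ← ofReal_norm, Real.norm_eq_abs, abs_of_nonneg hl.le]
  -- measurability
  have hm1 : AEStronglyMeasurable (fun p => (C * D) * ‖fhat p‖)
      (volume : Measure (EuclideanSpace ℝ (Fin d))) :=
    (hfhat.aestronglyMeasurable.norm.const_mul _)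
  have hm2 : AEStronglyMeasurable (fun p => (C * Nam) * ‖fmhat p - fhat p‖)
      (volume : Measure (EuclideanSpace ℝ (Fin d))) :=
    ((hfmhat.sub hfhat).aestronglyMeasurable.norm.const_mul _)
  -- key inequality
  have key : X ≤ ENNReal.ofReal (C * D) * Y + ENNReal.ofReal (1 - ε) * X := by
    calc X = eLpNorm (fun p => umhat p - uhat p) 2 volume := hPlanu
    _ ≤ eLpNorm (fun p => (C * D) * ‖fhat p‖ + (C * Nam) * ‖fmhat p - fhat p‖) 2 volume :=
        eLpNorm_mono hpt
    _ ≤ eLpNorm (fun p => (C * D) * ‖fhat p‖) 2 volume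
        + eLpNorm (fun p => (C * Nam) * ‖fmhat p - fhat p‖) 2 volume :=
        eLpNorm_add_le hm1 hm2 one_le_two
    _ = ENNReal.ofReal (C * D) * Y
        + ENNReal.ofReal (C * Nam) * eLpNorm (fun x => F (um x) x - F (u x) x) 2 volume := by
        rw [hg1, hg2, hPlanF, hPlanf]
    _ ≤ ENNReal.ofReal (C * D) * Y + ENNReal.ofReal (C * Nam) * (ENNReal.ofReal l * X) :=
        add_le_add_right (mul_le_mul_right hlip _) _
    _ ≤ ENNReal.ofReal (C * D) * Y + ENNReal.ofReal (1 - ε) * X := by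
        refine add_le_add_right ?_ _
        rw [← mul_assoc, ← ENNReal.ofReal_mul (by positivity)]
        exact mul_le_mul_left (ENNReal.ofReal_le_ofReal hcontr) _
  rcases eq_or_ne Y ⊤ with hYtop | hYfin
  · rcases (eq_or_lt_of_le hD0) with hDz | hDpos
    · have hkey2 : X ≤ ENNReal.ofReal (1 - ε) * X := by
        simpa [← hDz] using key
      have hX0 : X = 0 := by
        by_contra h
        have hlt : ENNReal.ofReal (1 - ε) * X < 1 * X :=
          (ENNReal.mul_lt_mul_iff_left h hXfin).2 (ENNReal.ofReal_lt_one.2 (by linarith))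
        rw [one_mul] at hlt
        exact absurd (hkey2.trans_lt hlt) (lt_irrefl _)
      rw [hX0]
      exact bot_le
    · have hne : ENNReal.ofReal (C / ε * D) ≠ 0 := by
        rw [← ENNReal.ofReal_zero, Ne, ENNReal.ofReal_eq_ofReal_iff (by positivity) le_rfl]
        positivity
      rw [hYtop, ENNReal.mul_top hne]
      exact le_top
  · -- pass to real numbers
    have hterm1 : ENNReal.ofReal (C * D) * Y ≠ ⊤ := ENNReal.mul_ne_top ENNReal.ofReal_ne_top hYfin
    have hterm2 : ENNReal.ofReal (1 - ε) * X ≠ ⊤ := ENNReal.mul_ne_top ENNReal.ofReal_ne_top hXfin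
    have hkeyR : X.toReal ≤ C * D * Y.toReal + (1 - ε) * X.toReal := by
      have := ENNReal.toReal_mono (ENNReal.add_ne_top.2 ⟨hterm1, hterm2⟩) key
      rwa [ENNReal.toReal_add hterm1 hterm2, ENNReal.toReal_mul, ENNReal.toReal_mul,
        ENNReal.toReal_ofReal (by positivity), ENNReal.toReal_ofReal (by linarith)] at this
    have hxR : X.toReal ≤ C / ε * D * Y.toReal := by
      rw [show C / ε * D * Y.toReal = (C * D * Y.toReal) / ε by ring, le_div_iff₀ hε0]
      nlinarith [ENNReal.toReal_nonneg (a := X)]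
    calc X = ENNReal.ofReal X.toReal := (ENNReal.ofReal_toReal hXfin).symm
    _ ≤ ENNReal.ofReal (C / ε * D * Y.toReal) := ENNReal.ofReal_le_ofReal hxR
    _ = ENNReal.ofReal (C / ε * D) * ENNReal.ofReal Y.toReal :=
        ENNReal.ofReal_mul (by positivity)
    _ = ENNReal.ofReal (C / ε * D) * Y := by rw [ENNReal.ofReal_toReal hYfin]
end
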